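/- Let d ≥ 1 and let ψ_1, …, ψ_{d²} be unit vectors in ℂ^d. Then the following are equivalent: (i) Σ_{I=1}^{d²} |ψ_I⟩⟨ψ_I| = d·1_d and |⟨ψ_I, ψ_J⟩|² = 1/(d+1) for all I ≠ J (that is, the ψ_I form a SIC); (ii) Σ_{I=1}^{d²} |ψ_I ⊗ ψ_I⟩⟨ψ_I ⊗ ψ_I| = (2d/(d+1))·Π_sym, where Π_sym is the orthogonal projection of ℂ^d ⊗ ℂ^d onto the symmetric subspace, i.e. the matrix with entries Π_sym((i,j),(k,l)) = (1/2)(δ_{ik}δ_{jl} + δ_{il}δ_{jk}). In other words, {ψ_I} is a SIC if and only if {ψ_I ⊗ ψ_I} is a tight frame for the symmetric subspace of ℂ^d ⊗ ℂ^d. -/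

import Mathlib

/-!
Write `S = ∑ I, |ψ_I ⊗ ψ_I⟩⟨ψ_I ⊗ ψ_I|`, `Π` for the symmetric projection and `c = 2d/(d+1)`.
As `ψ ⊗ ψ` is symmetric, `tr (Π S) = ∑ I, ‖ψ_I‖⁴ = d²`, while `tr (S²) = ∑ I J, |⟨ψ_I, ψ_J⟩|⁴`
and `tr (Π²) = d(d+1)/2`. For a SIC these give `tr ((S - cΠ)²) = 0`, and a Hermitian matrix with
vanishing Hilbert–Schmidt norm is zero.

Conversely, tracing out the second factor of `S = cΠ` gives `∑ I, |ψ_I⟩⟨ψ_I| = d • 1`. Fix `I` and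
put `x_K = |⟨ψ_I, ψ_K⟩|²`: the two frame identities give `∑ x_K = d` and `∑ x_K² = c`. Since
`x_I = 1`, the other `d² - 1` numbers have mean `1/(d+1)` and mean square `1/(d+1)²`, so their
variance vanishes and each of them equals `1/(d+1)`.
-/

open Matrix Complex

/-- Rank-one projector `|x⟩⟨x|` as a matrix. -/
noncomputable def outer {n : Type*} [Fintype n] (x : n → ℂ) : Matrix n n ℂ :=
  Matrix.of fun i j => x i * star (x j)

/-- The standard Hermitian inner product `⟨x, y⟩`, antilinear in the first slot. -/
noncomputable def cInner {n : Type*} [Fintype n] (x y : n → ℂ) : ℂ :=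
  ∑ k, star (x k) * y k

/-- The orthogonal projection onto the symmetric subspace of `ℂ^d ⊗ ℂ^d`. -/
noncomputable def symProj (d : ℕ) : Matrix (Fin d × Fin d) (Fin d × Fin d) ℂ :=
  Matrix.of fun p q =>
    (1 / 2 : ℂ) * ((if p.1 = q.1 then 1 else 0) * (if p.2 = q.2 then 1 else 0)
      + (if p.1 = q.2 then 1 else 0) * (if p.2 = q.1 then 1 else 0))

open Finset
open scoped ComplexOrder ComplexConjugate

section RankOne

variable {n ι : Type*} [Fintype n] [Fintype ι]

lemma outer_eq_vecMulVec (x : n → ℂ) : outer x = vecMulVec x (star x) := rfl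

lemma cInner_eq_dotProduct (x y : n → ℂ) : cInner x y = star x ⬝ᵥ y := rfl

lemma conj_cInner (x y : n → ℂ) : conj (cInner x y) = cInner y x := by
  simp [cInner, mul_comm]

lemma isHermitian_outer (x : n → ℂ) : (outer x).IsHermitian := by
  ext i j
  simp [outer, mul_comm]

lemma trace_outer (x : n → ℂ) : trace (outer x) = cInner x x := by
  rw [outer_eq_vecMulVec, trace_vecMulVec, cInner_eq_dotProduct, dotProduct_comm]

lemma trace_outer_mul_outer (x y : n → ℂ) :
    trace (outer x * outer y) = ((‖cInner x y‖ ^ 2 : ℝ) : ℂ) := by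
  rw [outer_eq_vecMulVec, outer_eq_vecMulVec, vecMulVec_mul_vecMulVec, trace_vecMulVec,
    dotProduct_smul, smul_eq_mul, dotProduct_comm x, ← cInner_eq_dotProduct,
    ← cInner_eq_dotProduct, ← conj_cInner x y, Complex.mul_conj']
  push_cast
  rfl

lemma trace_outer_mul_sum_outer (y : n → ℂ) (x : ι → n → ℂ) :
    trace (outer y * ∑ K, outer (x K)) = ((∑ K, ‖cInner y (x K)‖ ^ 2 : ℝ) : ℂ) := by
  simp [mul_sum, trace_sum, trace_outer_mul_outer]

lemma Matrix.IsHermitian.eq_of_trace_sub_mul_sub_eq_zero {R : Type*} [PartialOrder R]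
    [NonUnitalRing R] [StarRing R] [StarOrderedRing R] [NoZeroDivisors R] {A B : Matrix n n R}
    (h : (A - B).IsHermitian) (h0 : trace ((A - B) * (A - B)) = 0) : A = B := by
  rw [← sub_eq_zero, ← trace_conjTranspose_mul_self_eq_zero_iff, h.eq]
  exact h0

end RankOne

def tensorSq {n : Type*} (x : n → ℂ) : n × n → ℂ := fun p => x p.1 * x p.2

lemma cInner_tensorSq {n : Type*} [Fintype n] (x y : n → ℂ) :
    cInner (tensorSq x) (tensorSq y) = cInner x y ^ 2 := by
  simp only [cInner, tensorSq, Fintype.sum_prod_type, sq, sum_mul_sum, star_mul']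
  exact sum_congr rfl fun i _ => sum_congr rfl fun j _ => by ring

def partialTraceRight {R n m : Type*} [CommSemiring R] [Fintype m] :
    Matrix (n × m) (n × m) R →ₗ[R] Matrix n n R where
  toFun A := of fun i k => ∑ j, A (i, j) (k, j)
  map_add' A B := by ext; simp [sum_add_distrib]
  map_smul' c A := by ext; simp [mul_sum]

lemma partialTraceRight_outer_tensorSq {n : Type*} [Fintype n] (x : n → ℂ) :
    partialTraceRight (outer (tensorSq x)) = cInner x x • outer x := by
  ext i k
  simp only [partialTraceRight, LinearMap.coe_mk, AddHom.coe_mk, outer, tensorSq, of_apply,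
    Matrix.smul_apply, smul_eq_mul, cInner, sum_mul, star_mul']
  exact sum_congr rfl fun j _ => by ring

section SymmetricProjection

variable {d : ℕ}

lemma isHermitian_symProj (d : ℕ) : (symProj d).IsHermitian := by
  ext p q
  simp only [conjTranspose_apply, symProj, of_apply, star_mul', star_add, apply_ite star,
    star_one, star_zero, star_div₀, star_ofNat, eq_comm (a := q.1), eq_comm (a := q.2)]
  ring

lemma symProj_mulVec_tensorSq (x : Fin d → ℂ) : symProj d *ᵥ tensorSq x = tensorSq x := by
  ext ⟨i, j⟩
  unfold tensorSq
  simp only [symProj, mulVec, dotProduct, of_apply, Fintype.sum_prod_type, mul_add,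
    add_mul, ite_mul, one_mul, zero_mul, sum_add_distrib]
  simp [sum_ite_eq]
  ring

lemma trace_symProj_mul_outer_tensorSq (x : Fin d → ℂ) :
    trace (symProj d * outer (tensorSq x)) = cInner x x ^ 2 := by
  rw [outer_eq_vecMulVec, mul_vecMulVec, symProj_mulVec_tensorSq, trace_vecMulVec,
    dotProduct_comm, ← cInner_eq_dotProduct, cInner_tensorSq]

lemma trace_symProj_mul_symProj (d : ℕ) :
    trace (symProj d * symProj d) = ((d : ℂ) ^ 2 + d) / 2 := by
  simp only [Matrix.trace, Matrix.diag, mul_apply, symProj, of_apply, Fintype.sum_prod_type]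
  simp only [mul_add, add_mul, mul_ite, ite_mul, mul_one, mul_zero, zero_mul, sum_ite_eq',
    mem_univ, if_true, sum_add_distrib, sum_const, card_univ, Fintype.card_fin, nsmul_eq_mul]
  ring

lemma partialTraceRight_symProj (d : ℕ) :
    partialTraceRight (symProj d) = (((d : ℂ) + 1) / 2) • (1 : Matrix (Fin d) (Fin d) ℂ) := by
  ext i k
  simp only [partialTraceRight, LinearMap.coe_mk, AddHom.coe_mk, symProj, of_apply,
    Matrix.smul_apply, one_apply, smul_eq_mul]
  simp only [mul_add, mul_ite, mul_one, mul_zero, sum_add_distrib, sum_ite_eq', mem_univ,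
    if_true, sum_const, card_univ, Fintype.card_fin, nsmul_eq_mul]
  split_ifs <;> ring

end SymmetricProjection

lemma Finset.eq_of_sum_eq_of_sum_sq_eq {ι : Type*} {s : Finset ι} {x : ι → ℝ} {m : ℝ}
    (h1 : ∑ i ∈ s, x i = #s * m) (h2 : ∑ i ∈ s, x i ^ 2 = #s * m ^ 2) {i : ι} (hi : i ∈ s) :
    x i = m := by
  have hvar : ∑ i ∈ s, (x i - m) ^ 2 = 0 := by
    simp only [sub_sq, sum_add_distrib, sum_sub_distrib, ← sum_mul, ← mul_sum, sum_const,
      nsmul_eq_mul, h1, h2]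
    ring
  have := (sum_eq_zero_iff_of_nonneg fun i _ => sq_nonneg (x i - m)).mp hvar i hi
  exact sub_eq_zero.mp (pow_eq_zero_iff two_ne_zero |>.mp this)

lemma cast_card_erase_univ_add_one {N : ℕ} (I : Fin N) : (#(univ.erase I) : ℝ) + 1 = N := by
  exact_mod_cast (card_erase_add_one (mem_univ I)).trans (card_fin N)

section SIC

variable {d : ℕ} {ψ : Fin (d ^ 2) → Fin d → ℂ}

lemma sum_sq_sq_norm_cInner_of_overlaps (hunit : ∀ I, cInner (ψ I) (ψ I) = 1)
    (hover : ∀ I J, I ≠ J → ‖cInner (ψ I) (ψ J)‖ ^ 2 = 1 / (d + 1)) (I : Fin (d ^ 2)) :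
    ∑ K, (‖cInner (ψ I) (ψ K)‖ ^ 2) ^ 2 = 2 * d / (d + 1) := by
  rw [← add_sum_erase _ _ (mem_univ I), hunit, norm_one,
    sum_congr rfl fun K hK => by rw [hover I K (ne_of_mem_erase hK).symm], sum_const,
    nsmul_eq_mul]
  have hcard := cast_card_erase_univ_add_one I
  push_cast at hcard
  field_simp
  linear_combination hcard

theorem sum_outer_tensorSq_of_overlaps (hunit : ∀ I, cInner (ψ I) (ψ I) = 1)
    (hover : ∀ I J, I ≠ J → ‖cInner (ψ I) (ψ J)‖ ^ 2 = 1 / (d + 1)) :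
    ∑ I, outer (tensorSq (ψ I)) = (2 * (d : ℂ) / ((d : ℂ) + 1)) • symProj d := by
  set S := ∑ I, outer (tensorSq (ψ I))
  set c : ℂ := 2 * (d : ℂ) / ((d : ℂ) + 1)
  have hc : IsSelfAdjoint c := by simp [IsSelfAdjoint, c, star_div₀]
  have hSS : trace (S * S) = c * d ^ 2 := by
    simp only [S, sum_mul, trace_sum, trace_outer_mul_sum_outer, cInner_tensorSq, norm_pow,
      sum_sq_sq_norm_cInner_of_overlaps hunit hover, sum_const, card_fin, nsmul_eq_mul]
    push_cast
    ring
  have hSP : trace (symProj d * S) = d ^ 2 := by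
    simp [S, mul_sum, trace_sum, trace_symProj_mul_outer_tensorSq, hunit]
  have hS : S.IsHermitian :=
    isHermitian_iff_isSelfAdjoint.mpr (isSelfAdjoint_sum _ fun I _ => isHermitian_outer _)
  refine (hS.sub ((isHermitian_symProj d).smul hc)).eq_of_trace_sub_mul_sub_eq_zero ?_
  simp only [sub_mul, mul_sub, Matrix.smul_mul, Matrix.mul_smul, trace_sub, trace_smul,
    smul_eq_mul, trace_mul_comm S (symProj d), hSS, hSP, trace_symProj_mul_symProj, c]
  field_simp
  ring

theorem sum_outer_of_sum_outer_tensorSq (hunit : ∀ I, cInner (ψ I) (ψ I) = 1)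
    (h : ∑ I, outer (tensorSq (ψ I)) = (2 * (d : ℂ) / ((d : ℂ) + 1)) • symProj d) :
    ∑ I, outer (ψ I) = (d : ℂ) • (1 : Matrix (Fin d) (Fin d) ℂ) := by
  have h' := congrArg partialTraceRight h
  simp only [map_sum, map_smul, partialTraceRight_outer_tensorSq, hunit, one_smul,
    partialTraceRight_symProj, smul_smul] at h'
  rw [h']
  congr 1
  field_simp

theorem sq_norm_cInner_of_sum_outer_tensorSq (hunit : ∀ I, cInner (ψ I) (ψ I) = 1)
    (h : ∑ I, outer (tensorSq (ψ I)) = (2 * (d : ℂ) / ((d : ℂ) + 1)) • symProj d)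
    {I J : Fin (d ^ 2)} (hIJ : I ≠ J) : ‖cInner (ψ I) (ψ J)‖ ^ 2 = 1 / (d + 1) := by
  have hsum : ∑ K, ‖cInner (ψ I) (ψ K)‖ ^ 2 = d := by
    have := trace_outer_mul_sum_outer (ψ I) ψ
    rw [sum_outer_of_sum_outer_tensorSq hunit h, Matrix.mul_smul, mul_one, trace_smul,
      trace_outer, hunit, smul_eq_mul, mul_one] at this
    exact_mod_cast this.symm
  have hsum_sq : ∑ K, (‖cInner (ψ I) (ψ K)‖ ^ 2) ^ 2 = 2 * d / (d + 1) := by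
    have := trace_outer_mul_sum_outer (tensorSq (ψ I)) (fun K => tensorSq (ψ K))
    rw [h, Matrix.mul_smul, trace_smul, trace_mul_comm, trace_symProj_mul_outer_tensorSq,
      hunit, one_pow, smul_eq_mul, mul_one] at this
    simp only [cInner_tensorSq, norm_pow] at this
    apply Complex.ofReal_injective
    push_cast at this ⊢
    exact this.symm
  have hII : ‖cInner (ψ I) (ψ I)‖ ^ 2 = 1 := by simp [hunit]
  have hcard := cast_card_erase_univ_add_one I
  push_cast at hcard
  refine eq_of_sum_eq_of_sum_sq_eq (x := fun K => ‖cInner (ψ I) (ψ K)‖ ^ 2) ?_ ?_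
    (mem_erase.2 ⟨hIJ.symm, mem_univ J⟩)
  · rw [← add_sum_erase _ _ (mem_univ I), hII] at hsum
    field_simp
    linear_combination ((d : ℝ) + 1) * hsum - hcard
  · rw [← add_sum_erase _ _ (mem_univ I), hII] at hsum_sq
    field_simp at hsum_sq ⊢
    linear_combination ((d : ℝ) + 1) * hsum_sq - hcard

end SIC

theorem sic_iff_tight_frame_symmetric_subspace_general
    (d : ℕ) (ψ : Fin (d ^ 2) → Fin d → ℂ)
    (hunit : ∀ I, cInner (ψ I) (ψ I) = 1) :
    ((∑ I, outer (ψ I) = (d : ℂ) • (1 : Matrix (Fin d) (Fin d) ℂ)) ∧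
      ∀ I J, I ≠ J → ‖cInner (ψ I) (ψ J)‖ ^ 2 = 1 / (d + 1)) ↔
    (∑ I, outer (fun p : Fin d × Fin d => ψ I p.1 * ψ I p.2)
      = (2 * (d : ℂ) / ((d : ℂ) + 1)) • symProj d) := by
  change _ ↔ ∑ I, outer (tensorSq (ψ I)) = _
  exact ⟨fun ⟨_, hover⟩ => sum_outer_tensorSq_of_overlaps hunit hover,
    fun h => ⟨sum_outer_of_sum_outer_tensorSq hunit h,
      fun _ _ hIJ => sq_norm_cInner_of_sum_outer_tensorSq hunit h hIJ⟩⟩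

/-- A family of `d²` unit vectors in `ℂ^d` is a SIC if and only if the doubled
vectors `ψ_I ⊗ ψ_I` form a tight frame for the symmetric subspace of
`ℂ^d ⊗ ℂ^d`, with frame constant `2d/(d+1)`. -/
theorem sic_iff_tight_frame_symmetric_subspace
    (d : ℕ) (hd : 1 ≤ d) (ψ : Fin (d ^ 2) → Fin d → ℂ)
    (hunit : ∀ I, cInner (ψ I) (ψ I) = 1) :
    ((∑ I, outer (ψ I) = (d : ℂ) • (1 : Matrix (Fin d) (Fin d) ℂ)) ∧
      ∀ I J, I ≠ J → ‖cInner (ψ I) (ψ J)‖ ^ 2 = 1 / (d + 1)) ↔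
    (∑ I, outer (fun p : Fin d × Fin d => ψ I p.1 * ψ I p.2)
      = (2 * (d : ℂ) / ((d : ℂ) + 1)) • symProj d) :=
  sic_iff_tight_frame_symmetric_subspace_general d ψ hunit
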